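/- The 2-domination number of the fractal cubic network satisfies γ_2(FCN(l)) = 4·γ_2(FCN(l−1)) for all l ≥ 1, where γ_2(FCN(0)) = 2. -/

import Mathlib

open SimpleGraph

variable {V : Type*}

/-- `D` is a dominating set of `G`: every vertex is in `D` or adjacent to a vertex of `D`. -/
def IsDominating (G : SimpleGraph V) (D : Set V) : Prop :=
  ∀ u : V, u ∈ D ∨ ∃ d ∈ D, G.Adj u d

/-- `D` is a total dominating set of `G`: every vertex has a neighbor in `D`. -/
def IsTotalDominating (G : SimpleGraph V) (D : Set V) : Prop :=
  ∀ u : V, ∃ d ∈ D, G.Adj u d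

/-- `R` is a resolving set of `G`. -/
def IsResolving (G : SimpleGraph V) (R : Set V) : Prop :=
  ∀ u v : V, u ≠ v → ∃ r ∈ R, G.dist u r ≠ G.dist v r

/-- `D` is an independent set of `G`. -/
def IsIndependentSet (G : SimpleGraph V) (D : Set V) : Prop :=
  ∀ u ∈ D, ∀ v ∈ D, ¬ G.Adj u v

/-- the subgraph of `G` induced by `D` is connected. -/
def InducedConnected (G : SimpleGraph V) (D : Set V) : Prop :=
  (G.induce D).Connected

/-- closed neighborhood -/
def closedNbhd (G : SimpleGraph V) (u : V) : Set V :=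
  insert u (G.neighborSet u)

/-- `D` is a double dominating set of `G`: `|N[u] ∩ D| ≥ 2` for every vertex `u`. -/
def IsDoubleDominating (G : SimpleGraph V) (D : Set V) : Prop :=
  ∀ u : V, 2 ≤ (closedNbhd G u ∩ D).ncard

/-- `D` is a 2-dominating set of `G`: every vertex outside `D` has ≥ 2 neighbors in `D`. -/
def IsTwoDominating (G : SimpleGraph V) (D : Set V) : Prop :=
  ∀ u : V, u ∉ D → 2 ≤ (G.neighborSet u ∩ D).ncard

/-- minimum cardinality of a set of vertices satisfying `P`. -/
noncomputable def minCard (P : Set V → Prop) : ℕ :=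
  sInf {n : ℕ | ∃ D : Set V, P D ∧ D.ncard = n}

noncomputable def gamma (G : SimpleGraph V) : ℕ := minCard (IsDominating G)
noncomputable def gammaT (G : SimpleGraph V) : ℕ := minCard (IsTotalDominating G)
noncomputable def gammaC (G : SimpleGraph V) : ℕ :=
  minCard (fun D => IsDominating G D ∧ InducedConnected G D)
noncomputable def gammaI (G : SimpleGraph V) : ℕ :=
  minCard (fun D => IsDominating G D ∧ IsIndependentSet G D)
noncomputable def gammaX2 (G : SimpleGraph V) : ℕ := minCard (IsDoubleDominating G)
noncomputable def gamma2 (G : SimpleGraph V) : ℕ := minCard (IsTwoDominating G)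
noncomputable def mdim (G : SimpleGraph V) : ℕ := minCard (IsResolving G)
noncomputable def gammaR (G : SimpleGraph V) : ℕ :=
  minCard (fun D => IsDominating G D ∧ IsResolving G D)
noncomputable def gammaRI (G : SimpleGraph V) : ℕ :=
  minCard (fun D => IsDominating G D ∧ IsIndependentSet G D ∧ IsResolving G D)
noncomputable def gammaRT (G : SimpleGraph V) : ℕ :=
  minCard (fun D => IsTotalDominating G D ∧ IsResolving G D)
noncomputable def gammaRC (G : SimpleGraph V) : ℕ :=
  minCard (fun D => IsDominating G D ∧ InducedConnected G D ∧ IsResolving G D)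

/-- `u` and `v` are twins: `N(u) = N(v)` or `N[u] = N[v]`. -/
def AreTwins (G : SimpleGraph V) (u v : V) : Prop :=
  G.neighborSet u = G.neighborSet v ∨ closedNbhd G u = closedNbhd G v

/-- The rooted product `Γ ∘_v Ω`: a copy of `Ω` is attached at its root `v`
to every vertex of `Γ`. -/
def rootedProduct {α β : Type*} (Γ : SimpleGraph α) (Ω : SimpleGraph β) (v : β) :
    SimpleGraph (α × β) where
  Adj p q := (p.2 = v ∧ q.2 = v ∧ Γ.Adj p.1 q.1) ∨ (p.1 = q.1 ∧ Ω.Adj p.2 q.2)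
  symm := by
    constructor
    intro p q h
    rcases h with ⟨h1, h2, h3⟩ | ⟨h1, h2⟩
    · exact Or.inl ⟨h2, h1, h3.symm⟩
    · exact Or.inr ⟨h1.symm, h2.symm⟩
  loopless := by
    constructor
    intro p h
    rcases h with ⟨_, _, h⟩ | ⟨_, h⟩ <;> exact h.ne rfl

/-- Vertex type of the fractal cubic network `FCN l`. -/
def FCNVert : ℕ → Type
  | 0 => Fin 4
  | (l + 1) => Fin 4 × FCNVert l

/-- Auxiliary vertex `(01)^{l+1}` of `FCN l` (labels `00,01,11,10` ↦ `0,1,2,3`). -/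
def fcnAux : (l : ℕ) → FCNVert l
  | 0 => ((1 : Fin 4) : FCNVert 0)
  | (l + 1) => (((1 : Fin 4), fcnAux l) : FCNVert (l + 1))

/-- The designated root `10(01)^l` of `FCN l`. -/
def fcnRoot : (l : ℕ) → FCNVert l
  | 0 => ((3 : Fin 4) : FCNVert 0)
  | (l + 1) => (((3 : Fin 4), fcnAux l) : FCNVert (l + 1))

/-- The fractal cubic network: `FCN 0 = C₄` and
`FCN (l+1) = C₄ ∘_v FCN l`, rooted at the designated root of `FCN l`. -/
def FCN : (l : ℕ) → SimpleGraph (FCNVert l)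
  | 0 => cycleGraph 4
  | (l + 1) => rootedProduct (cycleGraph 4) (FCN l) (fcnRoot l)

/-! Copying a 2-dominating set of `FCN l` into all four copies 2-dominates `FCN (l + 1)`, so
`γ₂(FCN (l + 1)) ≤ 4 γ₂(FCN l)`. Conversely, the trace of a 2-dominating set of `FCN (l + 1)` on
one copy 2-dominates that copy except possibly at its root, which also has neighbours in other
copies. The induction therefore runs on the stronger claim that a set 2-dominating `FCN l` outside
`{fcnRoot l, fcnAux l}` has at least `2 · 4 ^ l` elements: since `fcnRoot (l + 1)` and
`fcnAux (l + 1)` lie over `fcnAux l`, each trace is exempt at most at the root and at `fcnAux l`.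
In `C₄` the exempt vertices are `1` and `3`, and the vertices `0`, `2` still force two elements. -/

def IsTwoDominatingOff (G : SimpleGraph V) (S D : Set V) : Prop :=
  ∀ u : V, u ∉ D → u ∉ S → 2 ≤ (G.neighborSet u ∩ D).ncard

theorem IsTwoDominating.isTwoDominatingOff {G : SimpleGraph V} {D : Set V}
    (hD : IsTwoDominating G D) (S : Set V) : IsTwoDominatingOff G S D :=
  fun u hu _ => hD u hu

theorem IsTwoDominatingOff.mono {G : SimpleGraph V} {S T D : Set V}
    (hD : IsTwoDominatingOff G S D) (hST : S ⊆ T) : IsTwoDominatingOff G T D :=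
  fun u hu huT => hD u hu fun huS => huT (hST huS)

theorem minCard_eq {P : Set V → Prop} {D : Set V} {n : ℕ} (hD : P D) (hn : D.ncard = n)
    (hmin : ∀ E, P E → n ≤ E.ncard) : minCard P = n :=
  le_antisymm (Nat.sInf_le ⟨D, hD, hn⟩)
    (le_csInf ⟨n, D, hD, hn⟩ fun _ ⟨E, hE, hm⟩ => hm ▸ hmin E hE)

theorem Set.ncard_eq_sum_ncard_preimage_mk {α β : Type*} [Fintype α] {D : Set (α × β)}
    (hD : D.Finite) : D.ncard = ∑ i, (Prod.mk i ⁻¹' D).ncard := by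
  let fiber : α → Set (α × β) := fun i => Prod.mk i '' (Prod.mk i ⁻¹' D)
  have hunion : D = ⋃ i, fiber i := by
    ext ⟨i, x⟩
    simp [fiber]
  have hdisj : Pairwise fun i j => Disjoint (fiber i) (fiber j) := by
    intro i j hij
    simp [fiber, Set.disjoint_left, hij.symm]
  conv_lhs => rw [hunion]
  rw [Set.ncard_iUnion_of_finite (fun i => hD.subset (hunion ▸ Set.subset_iUnion fiber i))
    hdisj, finsum_eq_sum_of_fintype]
  simp only [fiber, Set.ncard_image_of_injective _ (Prod.mk_right_injective _)]

theorem Set.ncard_preimage_snd {α β : Type*} (D : Set β) :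
    (Prod.snd ⁻¹' D : Set (α × β)).ncard = Nat.card α * D.ncard := by
  rw [← Set.univ_prod, Set.ncard_prod, Set.ncard_univ]

section RootedProduct

variable {α β : Type*} {Γ : SimpleGraph α} {Ω : SimpleGraph β} {v : β}

theorem rootedProduct_neighborSet_inter {i : α} {x : β} {D : Set (α × β)}
    (h : x = v → ∀ j, Γ.Adj i j → (j, v) ∉ D) :
    (rootedProduct Γ Ω v).neighborSet (i, x) ∩ D =
      Prod.mk i '' (Ω.neighborSet x ∩ Prod.mk i ⁻¹' D) := by
  ext ⟨j, y⟩
  constructor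
  · rintro ⟨⟨rfl, rfl, hadj⟩ | ⟨rfl, hadj⟩, hyD⟩
    · exact absurd hyD (h rfl j hadj)
    · exact ⟨y, ⟨hadj, hyD⟩, rfl⟩
  · rintro ⟨y, ⟨hadj, hyD⟩, ⟨⟩⟩
    exact ⟨Or.inr ⟨rfl, hadj⟩, hyD⟩

theorem IsTwoDominating.rootedProduct {D : Set β} (hD : IsTwoDominating Ω D) :
    IsTwoDominating (rootedProduct Γ Ω v) (Prod.snd ⁻¹' D) := by
  rintro ⟨i, x⟩ hx
  rw [rootedProduct_neighborSet_inter (by rintro rfl j - ; exact hx),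
    Set.ncard_image_of_injective _ (Prod.mk_right_injective i)]
  exact hD x hx

theorem IsTwoDominatingOff.preimage_mk {S D : Set (α × β)}
    (hD : IsTwoDominatingOff (rootedProduct Γ Ω v) S D) (i : α) :
    IsTwoDominatingOff Ω (insert v (Prod.mk i ⁻¹' S)) (Prod.mk i ⁻¹' D) := by
  intro x hxD hxS
  have hxv : x ≠ v := fun h => hxS (Or.inl h)
  have := hD (i, x) hxD fun h => hxS (Or.inr h)
  rwa [rootedProduct_neighborSet_inter (fun h => absurd h hxv),
    Set.ncard_image_of_injective _ (Prod.mk_right_injective i)] at this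

end RootedProduct

instance FCNVert.finite : ∀ l, Finite (FCNVert l)
  | 0 => inferInstanceAs (Finite (Fin 4))
  | (l + 1) => haveI := FCNVert.finite l; inferInstanceAs (Finite (Fin 4 × FCNVert l))

theorem isTwoDominating_cycleGraph_four : IsTwoDominating (cycleGraph 4) {0, 2} := by
  intro u hu
  have hN : (cycleGraph 4).neighborSet u ∩ {0, 2} = {0, 2} := by
    ext w
    fin_cases u <;> fin_cases w <;> simp_all <;> decide
  rw [hN, Set.ncard_pair (by decide)]

theorem two_le_ncard_of_isTwoDominatingOff_cycleGraph_four {D : Set (Fin 4)}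
    (hD : IsTwoDominatingOff (cycleGraph 4) {3, 1} D) : 2 ≤ D.ncard := by
  have hle : ∀ u : Fin 4, u ∉ D → u ∉ ({3, 1} : Set (Fin 4)) → 2 ≤ D.ncard := fun u hu hS =>
    (hD u hu hS).trans (Set.ncard_le_ncard Set.inter_subset_right (Set.toFinite _))
  by_cases h0 : (0 : Fin 4) ∈ D
  · by_cases h2 : (2 : Fin 4) ∈ D
    · exact (Set.one_lt_ncard (Set.toFinite _)).mpr ⟨0, h0, 2, h2, by decide⟩
    · exact hle 2 h2 (by decide)
  · exact hle 0 h0 (by decide)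

theorem exists_isTwoDominating_fcn (l : ℕ) :
    ∃ D, IsTwoDominating (FCN l) D ∧ D.ncard = 2 * 4 ^ l := by
  induction l with
  | zero =>
    exact ⟨_, isTwoDominating_cycleGraph_four, Set.ncard_pair (by decide : (0 : Fin 4) ≠ 2)⟩
  | succ l ih =>
    obtain ⟨D, hD, hcard⟩ := ih
    exact ⟨(Prod.snd ⁻¹' D : Set (Fin 4 × FCNVert l)), hD.rootedProduct,
      (Set.ncard_preimage_snd D).trans (by rw [hcard, Nat.card_fin]; ring)⟩

theorem le_ncard_of_isTwoDominatingOff_fcn (l : ℕ) {D : Set (FCNVert l)}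
    (hD : IsTwoDominatingOff (FCN l) {fcnRoot l, fcnAux l} D) : 2 * 4 ^ l ≤ D.ncard := by
  induction l with
  | zero => exact two_le_ncard_of_isTwoDominatingOff_cycleGraph_four hD
  | succ l ih =>
    have hfiber (i : Fin 4) : 2 * 4 ^ l ≤ (Prod.mk i ⁻¹' D).ncard := by
      refine ih ((IsTwoDominatingOff.preimage_mk hD i).mono ?_)
      rintro x (rfl | ⟨⟨⟩⟩ | ⟨⟨⟩⟩) <;> simp
    calc 2 * 4 ^ (l + 1) = ∑ _i : Fin 4, 2 * 4 ^ l := by simp; ring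
      _ ≤ ∑ i, (Prod.mk i ⁻¹' D).ncard := Finset.sum_le_sum fun i _ => hfiber i
      _ = D.ncard := (Set.ncard_eq_sum_ncard_preimage_mk (Set.toFinite _)).symm

theorem gamma2_fcn (l : ℕ) : gamma2 (FCN l) = 2 * 4 ^ l := by
  obtain ⟨D, hD, hcard⟩ := exists_isTwoDominating_fcn l
  exact minCard_eq hD hcard fun E hE =>
    le_ncard_of_isTwoDominatingOff_fcn l (hE.isTwoDominatingOff _)

theorem stmt19 :
    gamma2 (FCN 0) = 2 ∧ ∀ l : ℕ, gamma2 (FCN (l + 1)) = 4 * gamma2 (FCN l) :=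
  ⟨gamma2_fcn 0, fun l => by rw [gamma2_fcn, gamma2_fcn]; ring⟩
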